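/- Let B be a finite supersoluble brace and let p be the smallest prime dividing the order of B. If C is a subbrace of B with |(B,+):(C,+)| = p, then C is an ideal of B. -/
import Mathlib


/-- A (skew left) brace: a set with an additive group structure (not necessarily abelian)
and a multiplicative group structure sharing the same identity, satisfying the skew
distributive law `a * (b + c) = a * b + -a + a * c`. -/
class SkewBrace (B : Type*) extends AddGroup B, Group B where
  one_eq_zero : (1 : B) = (0 : B)
  skew_distrib : ∀ a b c : B, a * (b + c) = a * b + -a + a * c

/-- A group is supersoluble if it has a finite chain of normal subgroups with all
factors cyclic. -/
def Group.IsSupersoluble (G : Type*) [Group G] : Prop :=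
  ∃ (n : ℕ) (H : ℕ → Subgroup G),
    H 0 = ⊥ ∧ H n = ⊤ ∧ (∀ i, (H i).Normal) ∧ (∀ i, i < n → H i ≤ H (i + 1)) ∧
    ∀ i, i < n → ∃ x ∈ H (i + 1), ∀ y ∈ H (i + 1), ∃ k : ℤ, (x ^ k)⁻¹ * y ∈ H i

namespace SkewBrace

variable {B : Type*} [SkewBrace B]

/-- `lam a b = -a + a * b`, i.e. `λ_a(b)`. -/
def lam (a b : B) : B := -a + a * b

/-- the star operation `a ∗ b = λ_a(b) - b`. -/
def starOp (a b : B) : B := lam a b + -b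

/-- the additive commutator `[a,b]_+`. -/
def addCommutator (a b : B) : B := -a + -b + a + b

/-- A subbrace of `B`: a subset that is a subgroup of both `(B,+)` and `(B,·)`. -/
structure Subbrace (B : Type*) [SkewBrace B] where
  carrier : Set B
  zero_mem : (0 : B) ∈ carrier
  add_mem : ∀ {a b : B}, a ∈ carrier → b ∈ carrier → a + b ∈ carrier
  neg_mem : ∀ {a : B}, a ∈ carrier → -a ∈ carrier
  mul_mem : ∀ {a b : B}, a ∈ carrier → b ∈ carrier → a * b ∈ carrier
  inv_mem : ∀ {a : B}, a ∈ carrier → a⁻¹ ∈ carrier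

/-- An ideal of `B`: a subbrace that is normal in `(B,+)` and in `(B,·)` and is
invariant under all the maps `λ_b`. -/
structure BraceIdeal (B : Type*) [SkewBrace B] extends Subbrace B where
  addConj_mem : ∀ (b : B) {a : B}, a ∈ carrier → b + a + -b ∈ carrier
  mulConj_mem : ∀ (b : B) {a : B}, a ∈ carrier → b * a * b⁻¹ ∈ carrier
  lam_mem : ∀ (b : B) {a : B}, a ∈ carrier → lam b a ∈ carrier

/-- The additive subgroup underlying a subbrace. -/
def Subbrace.addSubgroup (S : Subbrace B) : AddSubgroup B where
  carrier := S.carrier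
  zero_mem' := S.zero_mem
  add_mem' := S.add_mem
  neg_mem' := S.neg_mem

/-- The multiplicative subgroup underlying a subbrace. -/
def Subbrace.subgroup (S : Subbrace B) : Subgroup B where
  carrier := S.carrier
  one_mem' := by rw [one_eq_zero]; exact S.zero_mem
  mul_mem' := S.mul_mem
  inv_mem' := S.inv_mem

/-- Given ideals `J ≤ I` of `B`, `MemSocQuotRel I J x` says that the coset of `x`
lies in `Soc(I/J) = Ker(λ) ∩ Z(I/J, +)` (for `I = B` take `I = Set.univ`). -/
def MemSocQuotRel (I J : Set B) (x : B) : Prop :=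
  x ∈ I ∧ (∀ y ∈ I, -y + lam x y ∈ J) ∧ ∀ y ∈ I, -(y + x) + (x + y) ∈ J

/-- Given ideals `J ≤ I` of `B`, `MemZetaQuotRel I J x` says that the coset of `x`
lies in `ζ(I/J) = Soc(I/J) ∩ Z(I/J, ·)`. -/
def MemZetaQuotRel (I J : Set B) (x : B) : Prop :=
  MemSocQuotRel I J x ∧ ∀ y ∈ I, (y * x)⁻¹ * (x * y) ∈ J

/-- The coset of `x` lies in `Soc(B/J)`. -/
def MemSocQuot (J : Set B) (x : B) : Prop := MemSocQuotRel Set.univ J x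

/-- The coset of `x` lies in `ζ(B/J)`. -/
def MemZetaQuot (J : Set B) (x : B) : Prop := MemZetaQuotRel Set.univ J x

/-- For ideals `I ≤ J`, the additive group of the quotient `J/I` is infinite cyclic. -/
def QuotAddInfCyclic (I J : Set B) : Prop :=
  ∃ x ∈ J, (∀ y ∈ J, ∃ n : ℤ, -(n • x) + y ∈ I) ∧ ∀ n : ℤ, n • x ∈ I → n = 0

/-- For ideals `I ≤ J`, the quotient `J/I` has prime order `p`. -/
def QuotPrimeOrder (I J : Set B) (p : ℕ) : Prop :=
  p.Prime ∧ ∃ x ∈ J, x ∉ I ∧ p • x ∈ I ∧ ∀ y ∈ J, ∃ n : ℤ, -(n • x) + y ∈ I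

/-- A brace is supersoluble if it has a finite chain of ideals each factor of which
either is additively infinite cyclic and contained in the socle of the corresponding
quotient, or has prime order. -/
def IsSupersoluble (B : Type*) [SkewBrace B] : Prop :=
  ∃ (n : ℕ) (I : ℕ → BraceIdeal B),
    (I 0).carrier = {0} ∧ (I n).carrier = Set.univ ∧
    (∀ i, i < n → (I i).carrier ⊆ (I (i + 1)).carrier) ∧
    ∀ i, i < n →
      (QuotAddInfCyclic (I i).carrier (I (i + 1)).carrier ∧
        ∀ x ∈ (I (i + 1)).carrier, MemSocQuot (I i).carrier x) ∨
      ∃ p : ℕ, QuotPrimeOrder (I i).carrier (I (i + 1)).carrier p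

/-- The upper socle series of the brace (carrier of the ideal) `I`. -/
def socChainRel (I : Set B) : ℕ → Set B
  | 0 => {0}
  | n + 1 => {x | MemSocQuotRel I (socChainRel I n) x}

/-- The upper central series of the brace (carrier of the ideal) `I`. -/
def zetaChainRel (I : Set B) : ℕ → Set B
  | 0 => {0}
  | n + 1 => {x | MemZetaQuotRel I (zetaChainRel I n) x}

/-- The upper socle series `Soc_n(B)` of `B`. -/
def socChain (B : Type*) [SkewBrace B] : ℕ → Set B := socChainRel Set.univ

/-- The upper central series `ζ_n(B)` of `B`. -/
def zetaChain (B : Type*) [SkewBrace B] : ℕ → Set B := zetaChainRel Set.univ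

/-- A brace is centrally nilpotent if its upper central series reaches `B`. -/
def IsCentrallyNilpotent (B : Type*) [SkewBrace B] : Prop :=
  ∃ m : ℕ, zetaChain B m = Set.univ

end SkewBrace

section MinPrimeNormal

theorem my_normal_of_index_min_prime {G : Type*} [Group G] [Finite G] {H : Subgroup G}
    {p : ℕ} (hp : p.Prime) (hidx : H.index = p)
    (hmin : ∀ q : ℕ, q.Prime → q ∣ Nat.card G → p ≤ q) : H.Normal := by
  have hKle : H.normalCore ≤ H := H.normalCore_le
  have hrel : H.normalCore.relIndex H * H.index = H.normalCore.index :=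
    Subgroup.relIndex_mul_index hKle
  haveI : Fintype (G ⧸ H) := Fintype.ofFinite _
  haveI : DecidableEq (G ⧸ H) := Classical.decEq _
  have hcardQ : Nat.card (G ⧸ H) = p := by rw [← Subgroup.index_eq_card, hidx]
  have hperm : Nat.card (Equiv.Perm (G ⧸ H)) = p.factorial := by
    rw [Nat.card_eq_fintype_card, Fintype.card_perm, ← Nat.card_eq_fintype_card, hcardQ]
  have hKidx : H.normalCore.index ∣ p.factorial := by
    rw [Subgroup.index_eq_card, H.normalCore_eq_ker,
      Nat.card_congr (QuotientGroup.quotientKerEquivRange (MulAction.toPermHom G (G ⧸ H))).toEquiv,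
      ← hperm]
    exact Subgroup.card_subgroup_dvd_card _
  have hfac : p.factorial = p * (p-1).factorial := by
    have hpos := hp.pos
    obtain ⟨k, rfl⟩ : ∃ k, p = k + 1 := ⟨p - 1, by omega⟩
    simp [Nat.factorial_succ]
  have hm : H.normalCore.relIndex H ∣ (p - 1).factorial := by
    have h1 : p * H.normalCore.relIndex H ∣ p * (p - 1).factorial := by
      rw [← hfac, mul_comm]
      rw [hidx] at hrel
      rw [hrel]; exact hKidx
    exact (mul_dvd_mul_iff_left hp.pos.ne').mp h1
  have hmG : H.normalCore.relIndex H ∣ Nat.card G :=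
    dvd_trans ⟨H.index, hrel.symm⟩ (Subgroup.index_dvd_card H.normalCore)
  have hone : H.normalCore.relIndex H = 1 := by
    by_contra hne
    have hq := Nat.minFac_prime hne
    have h1 : p ≤ (H.normalCore.relIndex H).minFac := hmin _ hq (dvd_trans (Nat.minFac_dvd _) hmG)
    have h2 : (H.normalCore.relIndex H).minFac ≤ p - 1 :=
      (Nat.Prime.dvd_factorial hq).mp (dvd_trans (Nat.minFac_dvd _) hm)
    have := hp.two_le
    omega
  have hle : H ≤ H.normalCore := Subgroup.relIndex_eq_one.mp hone
  have hEq : H.normalCore = H := le_antisymm hKle hle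
  rw [← hEq]; exact H.normalCore_normal

theorem my_addNormal_of_index_min_prime {G : Type*} [AddGroup G] [Finite G] {H : AddSubgroup G}
    {p : ℕ} (hp : p.Prime) (hidx : H.index = p)
    (hmin : ∀ q : ℕ, q.Prime → q ∣ Nat.card G → p ≤ q) : H.Normal := by
  have h : (AddSubgroup.toSubgroup H).Normal :=
    my_normal_of_index_min_prime (G := Multiplicative G) hp
      (by rw [AddSubgroup.index_toSubgroup, hidx]) hmin
  constructor
  intro n hn g
  exact h.conj_mem (Multiplicative.ofAdd n) hn (Multiplicative.ofAdd g)

end MinPrimeNormal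

namespace SkewBrace

variable {B : Type*} [SkewBrace B]

lemma mul_eq_add_lam (a b : B) : a * b = a + lam a b := by
  rw [lam, add_neg_cancel_left]

lemma lam_self_zero (a : B) : lam a 0 = 0 := by
  have h : a * (0:B) = a := by rw [← one_eq_zero, mul_one]
  rw [lam, h, neg_add_cancel]

lemma lam_add' (a b c : B) : lam a (b + c) = lam a b + lam a c := by
  simp only [lam, skew_distrib]
  simp [add_assoc]

/-- `lam a` as an additive monoid hom. -/
def lamHom (a : B) : B →+ B where
  toFun := lam a
  map_zero' := lam_self_zero a
  map_add' := lam_add' a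

lemma lam_neg' (a b : B) : lam a (-b) = -(lam a b) := map_neg (lamHom a) b

lemma lam_zsmul' (a : B) (n : ℤ) (b : B) : lam a (n • b) = n • lam a b :=
  map_zsmul (lamHom a) n b

lemma lam_mul' (a b c : B) : lam (a * b) c = lam a (lam b c) := by
  have hneg : a * (-b) = a + -(a * b) + a := by
    have h := skew_distrib a b (-b)
    rw [add_neg_cancel, ← one_eq_zero, mul_one, add_assoc] at h
    have h2 : -a + a * (-b) = -(a*b) + a := by
      have h2 := congrArg (fun z => -(a*b) + z) h
      simp only [neg_add_cancel_left] at h2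
      exact h2.symm
    calc a * (-b) = a + (-a + a * (-b)) := (add_neg_cancel_left a _).symm
    _ = a + (-(a*b) + a) := by rw [h2]
    _ = a + -(a*b) + a := by rw [add_assoc]
  simp only [lam]
  rw [skew_distrib, hneg, mul_assoc]
  simp [add_assoc, neg_add_cancel_left, add_neg_cancel_left]

lemma lam_one' (b : B) : lam 1 b = b := by
  rw [lam, one_mul, one_eq_zero, neg_zero, zero_add]

lemma lam_lam_inv (a b : B) : lam a (lam a⁻¹ b) = b := by
  rw [← lam_mul', mul_inv_cancel, lam_one']

end SkewBrace

namespace SkewBrace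

lemma lam_fixes_quot {B : Type*} [SkewBrace B] [Finite B] {p : ℕ} (hp : p.Prime)
    (hmin : ∀ q : ℕ, q.Prime → q ∣ Nat.card B → p ≤ q)
    (J K : BraceIdeal B) (x : B) (hxK : x ∈ K.carrier) (hxJ : x ∉ J.carrier)
    (hpx : p • x ∈ J.carrier)
    (hgen : ∀ y ∈ K.carrier, ∃ k : ℤ, -(k • x) + y ∈ J.carrier) :
    ∀ (b : B), ∀ t ∈ K.carrier, -t + lam b t ∈ J.carrier := by
  haveI hFp : Fact p.Prime := ⟨hp⟩
  haveI hN : J.toSubbrace.addSubgroup.Normal := ⟨fun n hn g => J.addConj_mem g hn⟩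
  let Q := B ⧸ J.toSubbrace.addSubgroup
  let π : B →+ Q := QuotientAddGroup.mk' J.toSubbrace.addSubgroup
  have hmk : ∀ a b : B, π a = π b ↔ -a + b ∈ J.carrier := fun a b => QuotientAddGroup.eq
  have hJ0 : ∀ a : B, a ∈ J.carrier → π a = 0 := by
    intro a ha
    exact (QuotientAddGroup.eq_zero_iff a).mpr ha
  have hx0 : π x ≠ 0 := fun h => hxJ ((QuotientAddGroup.eq_zero_iff x).mp h)
  have hord : addOrderOf (π x) = p := by
    have h1 : p • (π x) = 0 := by
      rw [← map_nsmul]; exact hJ0 _ hpx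
    rcases (Nat.Prime.eq_one_or_self_of_dvd hp _ (addOrderOf_dvd_of_nsmul_eq_zero h1)) with h | h
    · exfalso
      have h2 := addOrderOf_nsmul_eq_zero (π x)
      rw [h, one_nsmul] at h2
      exact hx0 h2
    · exact h
  have hzx : ∀ k : ℤ, k • (π x) = 0 ↔ (p : ℤ) ∣ k := by
    intro k
    rw [← hord]
    exact addOrderOf_dvd_iff_zsmul_eq_zero.symm
  have key : ∀ (b' : B) (m' : ℤ), π (lam b' x) = m' • (π x) →
      ∀ t ∈ K.carrier, ∀ k : ℤ, π t = k • (π x) → π (lam b' t) = (k * m') • (π x) := by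
    intro b' m' hb' t ht k hk
    have h1 : -(k • x) + t ∈ J.carrier := by
      rw [← hmk]; rw [map_zsmul, hk]
    have ht' : t = k • x + (-(k • x) + t) := by rw [add_neg_cancel_left]
    have h2 : lam b' t = k • lam b' x + lam b' (-(k • x) + t) := by
      conv_lhs => rw [ht']
      rw [lam_add', lam_zsmul']
    rw [h2, map_add, map_zsmul, hb', hJ0 _ (J.lam_mem b' h1), add_zero, ← mul_zsmul, mul_comm k m']
  intro b
  obtain ⟨m, hm⟩ := hgen (lam b x) (K.lam_mem b hxK)
  have hm : π (lam b x) = m • π x := by rw [← map_zsmul]; exact ((hmk _ _).mpr hm).symm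
  obtain ⟨m', hm'⟩ := hgen (lam b⁻¹ x) (K.lam_mem b⁻¹ hxK)
  have hm' : π (lam b⁻¹ x) = m' • π x := by rw [← map_zsmul]; exact ((hmk _ _).mpr hm').symm
  have pows : ∀ s : ℕ, π (lam (b ^ s) x) = (m ^ s) • (π x) := by
    intro s
    induction s with
    | zero => simp [lam_one']
    | succ s ih =>
      rw [pow_succ, lam_mul']
      have := key (b ^ s) (m ^ s) ih (lam b x) (K.lam_mem b hxK) m hm
      rw [this, pow_succ, mul_comm]
  have h1 : (m ^ orderOf b - 1) • (π x) = 0 := by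
    have := pows (orderOf b)
    rw [pow_orderOf_eq_one, lam_one'] at this
    rw [sub_zsmul, one_zsmul, ← this]
    simp
  have h2 : (m' * m - 1) • (π x) = 0 := by
    have := key b m hm (lam b⁻¹ x) (K.lam_mem b⁻¹ hxK) m' hm'
    rw [lam_lam_inv] at this
    rw [sub_zsmul, one_zsmul, ← this]
    simp
  have hps : (p : ℤ) ∣ m ^ orderOf b - 1 := (hzx _).mp h1
  have hpu : (p : ℤ) ∣ m' * m - 1 := (hzx _).mp h2
  have hu1 : (m : ZMod p) ^ orderOf b = 1 := by
    have := (ZMod.intCast_zmod_eq_zero_iff_dvd _ p).mpr hps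
    push_cast at this
    linear_combination this
  have hunit : (m' : ZMod p) * (m : ZMod p) = 1 := by
    have := (ZMod.intCast_zmod_eq_zero_iff_dvd _ p).mpr hpu
    push_cast at this
    linear_combination this
  have hu0 : (m : ZMod p) ≠ 0 := by
    intro h
    rw [h, mul_zero] at hunit
    exact one_ne_zero hunit.symm
  have hfermat : (m : ZMod p) ^ (p - 1) = 1 := ZMod.pow_card_sub_one_eq_one hu0
  have hcop : Nat.gcd (Nat.card B) (p - 1) = 1 := by
    by_contra hne
    have hq := Nat.minFac_prime hne
    have hd := Nat.minFac_dvd (Nat.gcd (Nat.card B) (p - 1))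
    have h1 : p ≤ (Nat.gcd (Nat.card B) (p - 1)).minFac :=
      hmin _ hq (hd.trans (Nat.gcd_dvd_left _ _))
    have h2 : (Nat.gcd (Nat.card B) (p - 1)).minFac ≤ p - 1 :=
      Nat.le_of_dvd (by have := hp.two_le; omega) (hd.trans (Nat.gcd_dvd_right _ _))
    have := hp.two_le
    omega
  have hou : orderOf (m : ZMod p) ∣ 1 := by
    rw [← hcop]
    exact Nat.dvd_gcd ((orderOf_dvd_of_pow_eq_one hu1).trans (orderOf_dvd_natCard b))
      (orderOf_dvd_of_pow_eq_one hfermat)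
  have humone : (m : ZMod p) = 1 := orderOf_eq_one_iff.mp (Nat.eq_one_of_dvd_one hou)
  have hpm : (p : ℤ) ∣ m - 1 := by
    rw [← ZMod.intCast_zmod_eq_zero_iff_dvd]
    push_cast
    rw [humone, sub_self]
  have hlx : π (lam b x) = π x := by
    rw [hm]
    have : m • (π x) = (m - 1) • (π x) + (1 : ℤ) • (π x) := by rw [← add_zsmul]; norm_num
    rw [this, (hzx _).mpr hpm, zero_add, one_zsmul]
  intro t ht
  obtain ⟨k, hk⟩ := hgen t ht
  have hk : π t = k • π x := by rw [← map_zsmul]; exact ((hmk _ _).mpr hk).symm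
  have := key b 1 (by rw [one_zsmul]; exact hlx) t ht k hk
  rw [mul_one, ← hk] at this
  exact (hmk t (lam b t)).mp this.symm

end SkewBrace

namespace SkewBrace

/-- Let `B` be a finite supersoluble brace and `p` the smallest prime dividing the
order of `B`. Every subbrace of index `p` is an ideal of `B`. -/
theorem subbrace_index_min_prime_isIdeal (B : Type*) [SkewBrace B] [Finite B]
    (hB : IsSupersoluble B) (p : ℕ) (hp : p.Prime) (hdvd : p ∣ Nat.card B)
    (hmin : ∀ q : ℕ, q.Prime → q ∣ Nat.card B → p ≤ q)
    (C : Subbrace B) (hidx : C.addSubgroup.index = p) :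
    ∃ I : BraceIdeal B, I.carrier = C.carrier := by
  classical
  have hp2 := hp.two_le
  have hCaddN : C.addSubgroup.Normal := my_addNormal_of_index_min_prime hp hidx hmin
  haveI : Nonempty C.addSubgroup := ⟨⟨0, C.zero_mem⟩⟩
  have hidxm : C.subgroup.index = p := by
    have h1 := Subgroup.index_mul_card C.subgroup
    have h2 := AddSubgroup.index_mul_card C.addSubgroup
    have hCcard : Nat.card C.subgroup = Nat.card C.addSubgroup :=
      Nat.card_congr (Equiv.subtypeEquivRight (fun x => Iff.rfl))
    have hCpos : 0 < Nat.card C.addSubgroup := Nat.card_pos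
    rw [hCcard] at h1
    rw [hidx] at h2
    exact Nat.eq_of_mul_eq_mul_right hCpos (h1.trans h2.symm)
  have hCmulN : C.subgroup.Normal := my_normal_of_index_min_prime hp hidxm hmin
  obtain ⟨n, I, hI0, hIn, hmono, hfac⟩ := hB
  have hCne : ¬ (Set.univ : Set B) ⊆ C.carrier := by
    intro h
    have htop : C.addSubgroup = ⊤ := by
      rw [AddSubgroup.eq_top_iff']
      intro y
      exact h (Set.mem_univ y)
    rw [htop, AddSubgroup.index_top] at hidx
    omega
  have hex : ∃ i, ¬ (I i).carrier ⊆ C.carrier := ⟨n, by rw [hIn]; exact hCne⟩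
  have hjjpos : Nat.find hex ≠ 0 := by
    intro h
    have h2 := Nat.find_spec hex
    rw [h, hI0] at h2
    apply h2
    intro y hy
    rw [Set.mem_singleton_iff] at hy
    subst hy
    exact C.zero_mem
  obtain ⟨j, hj⟩ : ∃ j, Nat.find hex = j + 1 := ⟨Nat.find hex - 1, by omega⟩
  have hKnot : ¬ (I (j+1)).carrier ⊆ C.carrier := by rw [← hj]; exact Nat.find_spec hex
  have hJsub : (I j).carrier ⊆ C.carrier := by
    by_contra h
    exact Nat.find_min hex (by omega) h
  have hjn : j < n := by
    have h2 : Nat.find hex ≤ n := Nat.find_le (by rw [hIn]; exact hCne)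
    omega
  set J := I j with hJdef
  set K := I (j+1) with hKdef
  obtain ⟨q, hq, x, hxK, hxJ, hqx, hgen⟩ : ∃ q, QuotPrimeOrder J.carrier K.carrier q := by
    rcases hfac j hjn with ⟨⟨x, hxK, hgen, hfree⟩, _⟩ | h
    · exfalso
      have hpos : 0 < addOrderOf x := addOrderOf_pos x
      have h0 := hfree (addOrderOf x) (by
        rw [natCast_zsmul, addOrderOf_nsmul_eq_zero]
        exact J.addSubgroup.zero_mem)
      omega
    · exact h
  -- quotient by C
  haveI hCN' : C.addSubgroup.Normal := hCaddN
  set πc : B →+ B ⧸ C.addSubgroup := QuotientAddGroup.mk' C.addSubgroup with hπc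
  have hmkc : ∀ a b : B, πc a = πc b ↔ -a + b ∈ C.carrier := fun a b => QuotientAddGroup.eq
  have hc0 : ∀ a : B, πc a = 0 ↔ a ∈ C.carrier := fun a => QuotientAddGroup.eq_zero_iff a
  have hcardQ : Nat.card (B ⧸ C.addSubgroup) = p := by
    rw [← AddSubgroup.index_eq_card, hidx]
  obtain ⟨k₀, hk₀K, hk₀C⟩ := Set.not_subset.mp hKnot
  obtain ⟨k1, hk1⟩ := hgen k₀ hk₀K
  have hk1' : πc k₀ = k1 • πc x := by
    rw [← map_zsmul]
    exact ((hmkc _ _).mpr (hJsub hk1)).symm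
  have hx0 : πc x ≠ 0 := by
    intro h
    apply hk₀C
    rw [← hc0, hk1', h, smul_zero]
  have hordc : addOrderOf (πc x) = q := by
    have h1 : q • (πc x) = 0 := by
      rw [← map_nsmul, hc0]
      exact hJsub hqx
    rcases (Nat.Prime.eq_one_or_self_of_dvd hq _ (addOrderOf_dvd_of_nsmul_eq_zero h1)) with h | h
    · exfalso
      have h2 := addOrderOf_nsmul_eq_zero (πc x)
      rw [h, one_nsmul] at h2
      exact hx0 h2
    · exact h
  have hqp : q = p := by
    have h1 : addOrderOf (πc x) ∣ p := by
      rw [← hcardQ]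
      exact addOrderOf_dvd_natCard _
    rw [hordc] at h1
    exact (Nat.prime_dvd_prime_iff_eq hq hp).mp h1
  subst hqp
  -- C ∩ K ⊆ J
  have hCK : ∀ a ∈ C.carrier, a ∈ K.carrier → a ∈ J.carrier := by
    intro a haC haK
    obtain ⟨k, hk⟩ := hgen a haK
    have hk' : πc a = k • πc x := by
      rw [← map_zsmul]
      exact ((hmkc _ _).mpr (hJsub hk)).symm
    have h0 : k • πc x = 0 := by rw [← hk', hc0]; exact haC
    have hdvd : (q : ℤ) ∣ k := by
      rw [← hordc]
      exact addOrderOf_dvd_iff_zsmul_eq_zero.mpr h0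
    obtain ⟨t, rfl⟩ := hdvd
    have hkxJ : ((q : ℤ) * t) • x ∈ J.carrier := by
      rw [mul_comm, mul_zsmul, natCast_zsmul]
      exact J.addSubgroup.zsmul_mem hqx t
    have : a = ((q:ℤ) * t) • x + (-(((q:ℤ) * t) • x) + a) := by rw [add_neg_cancel_left]
    rw [this]
    exact J.addSubgroup.add_mem hkxJ hk
  -- decomposition B = C + K
  have hdecomp : ∀ b : B, ∃ c ∈ C.carrier, ∃ k ∈ K.carrier, b = c + k := by
    have htop : AddSubgroup.zmultiples (πc x) = ⊤ := by
      apply AddSubgroup.eq_top_of_card_eq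
      rw [Nat.card_zmultiples, hordc, hcardQ]
    intro b
    have hb : πc b ∈ AddSubgroup.zmultiples (πc x) := by rw [htop]; trivial
    obtain ⟨k, hk⟩ := AddSubgroup.mem_zmultiples_iff.mp hb
    have hc : -(k • x) + b ∈ C.carrier := by
      rw [← hmkc, map_zsmul, hk]
    refine ⟨k • x + (-(k • x) + b) + -(k • x), hCaddN.conj_mem _ hc (k • x),
      k • x, K.addSubgroup.zsmul_mem hxK k, ?_⟩
    simp only [add_assoc, neg_add_cancel, add_zero, add_neg_cancel_left, neg_add_cancel_left]
  -- lambda triviality on K/J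
  have hlamtriv : ∀ (b : B), ∀ t ∈ K.carrier, -t + lam b t ∈ J.carrier :=
    lam_fixes_quot hp hmin J K x hxK hxJ hqx hgen
  -- lam of elements of K stabilizes C
  have hlamC : ∀ y ∈ K.carrier, ∀ a ∈ C.carrier, lam y a ∈ C.carrier := by
    intro y hy a ha
    set t := a⁻¹ * y * a with hts
    have htK : t ∈ K.carrier := by
      have h1 := K.mulConj_mem a⁻¹ hy
      rwa [inv_inv] at h1
    have hj7J : t * y⁻¹ ∈ J.carrier := by
      apply hCK
      · have h1 : y * a * y⁻¹ ∈ C.carrier := hCmulN.conj_mem a ha y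
        have h2 : a⁻¹ * (y * a * y⁻¹) ∈ C.carrier := C.mul_mem (C.inv_mem ha) h1
        have h3 : t * y⁻¹ = a⁻¹ * (y * a * y⁻¹) := by rw [hts]; group
        rw [h3]
        exact h2
      · exact K.mul_mem htK (K.inv_mem hy)
    set j7 := t * y⁻¹ with hj7
    set j8 := -y + lam j7 y with hj8def
    have hj8J : j8 ∈ J.carrier := hlamtriv j7 y hy
    set j1 := -t + lam a t with hj1def
    have hj1J : j1 ∈ J.carrier := hlamtriv a t htK
    have ht7 : t = j7 + (y + j8) := by
      have h1 : t = j7 * y := by rw [hj7]; group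
      rw [hj8def, add_neg_cancel_left, ← mul_eq_add_lam, ← h1]
    have hya : y * a = a * t := by rw [hts]; group
    have heq : lam y a = -y + (a + (t + j1)) := by
      rw [hj1def, add_neg_cancel_left, lam, hya, mul_eq_add_lam a t]
    have heq2 : lam y a = ((-y + (a + j7) + y) + j8) + j1 := by
      rw [heq, ht7]
      simp [add_assoc]
    have hmem : -y + (a + j7) + y ∈ C.carrier := by
      have h1 : a + j7 ∈ C.carrier := C.add_mem ha (hJsub hj7J)
      have h2 := hCaddN.conj_mem _ h1 (-y)
      rwa [neg_neg] at h2
    rw [heq2]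
    exact C.add_mem (C.add_mem hmem (hJsub hj8J)) (hJsub hj1J)
  refine ⟨⟨C, fun b {a} ha => hCaddN.conj_mem a ha b,
    fun b {a} ha => hCmulN.conj_mem a ha b, fun b {a} ha => ?_⟩, rfl⟩
  obtain ⟨c, hc, k, hk, rfl⟩ := hdecomp b
  have hbck : c + k = c * lam c⁻¹ k := by rw [mul_eq_add_lam, lam_lam_inv]
  rw [hbck, lam_mul']
  have h1 : lam (lam c⁻¹ k) a ∈ C.carrier := hlamC _ (K.lam_mem c⁻¹ hk) a ha
  rw [lam]
  exact C.add_mem (C.neg_mem hc) (C.mul_mem hc h1)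

end SkewBrace
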